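/- arXiv:2409.19340 — 2 statements merged into one kernel-verified Lean document; each statement's English description precedes it below -/
import Mathlib

section
/- Let $X_1,\dots,X_n$ be independent and identically distributed random variables with $\mathbb{P}(X_1=i)=p(i)$ for $1\le i\le K$, where $p(i)>0$ for all $i$, let $\hat p(i)$ be the empirical distribution, and let $\sigma>0$, $b>0$. Then for any $\varepsilon>0$, $\mathbb{P}\Big(\frac{\sqrt{n}}{b\,\sigma}\Big|\sum_{i=1}^{K}\hat p(i)\ln\frac{\hat p(i)}{p(i)}\Big|>\varepsilon\Big) \le 2\sum_{i=1}^{K}\exp\big(-2\varepsilon\sqrt{n}\,b\,\sigma\, p(i)^2\big)$. -/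
/-!
Gibbs' inequality and `log x ≤ x - 1` give `0 ≤ ∑ p̂ log (p̂/p) ≤ ∑ (p̂ - p)² / p`: the
Kullback–Leibler divergence is dominated by the χ²-divergence. Hence, with `δ² = ε b σ / √n`, the
event can only occur if `|p̂(i) - p(i)| > p(i) δ` for some `i`. By Hoeffding's inequality for the
`n` independent indicators `1{X_j = i}`, that has probability at most `2 exp (-2 n p(i)² δ²)`,
which is the `i`-th term of the bound; a union bound over `i` finishes the proof.
-/

open MeasureTheory ProbabilityTheory

/-- The empirical distribution `p̂(i)(ω) = (1/n) ∑_{j=1}^n 1_{X_j(ω) = i}`. -/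
noncomputable def empP {Ω : Type*} (X : ℕ → Ω → ℕ) (n i : ℕ) (ω : Ω) : ℝ :=
  (∑ j ∈ Finset.Icc 1 n, if X j ω = i then (1 : ℝ) else 0) / n

open Real Finset

section KLChiSquare

lemma sub_le_mul_log_div {q p : ℝ} (hq : 0 ≤ q) (hp : 0 < p) : q - p ≤ q * log (q / p) := by
  rcases hq.eq_or_lt with rfl | hq
  · simpa using hp.le
  · have := one_sub_inv_le_log_of_pos (div_pos hq hp)
    calc q - p = q * (1 - (q / p)⁻¹) := by field_simp
      _ ≤ q * log (q / p) := by gcongr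

lemma mul_log_div_le {q p : ℝ} (hq : 0 ≤ q) (hp : 0 < p) :
    q * log (q / p) ≤ (q - p) ^ 2 / p + (q - p) := by
  rcases hq.eq_or_lt with rfl | hq
  · simp [sq, hp.ne']
  · have := log_le_sub_one_of_pos (div_pos hq hp)
    calc q * log (q / p) ≤ q * (q / p - 1) := by gcongr
      _ = (q - p) ^ 2 / p + (q - p) := by field_simp; ring

variable {ι : Type*} {s : Finset ι} {q p : ι → ℝ}

lemma sum_mul_log_div_nonneg (hq : ∀ i ∈ s, 0 ≤ q i) (hp : ∀ i ∈ s, 0 < p i)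
    (hsum : ∑ i ∈ s, q i = ∑ i ∈ s, p i) : 0 ≤ ∑ i ∈ s, q i * log (q i / p i) :=
  calc 0 = ∑ i ∈ s, (q i - p i) := by rw [sum_sub_distrib, hsum, sub_self]
    _ ≤ ∑ i ∈ s, q i * log (q i / p i) :=
      sum_le_sum fun i hi => sub_le_mul_log_div (hq i hi) (hp i hi)

lemma sum_mul_log_div_le_sum_sq_div (hq : ∀ i ∈ s, 0 ≤ q i) (hp : ∀ i ∈ s, 0 < p i)
    (hsum : ∑ i ∈ s, q i = ∑ i ∈ s, p i) :
    ∑ i ∈ s, q i * log (q i / p i) ≤ ∑ i ∈ s, (q i - p i) ^ 2 / p i :=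
  calc ∑ i ∈ s, q i * log (q i / p i)
      ≤ ∑ i ∈ s, ((q i - p i) ^ 2 / p i + (q i - p i)) :=
        sum_le_sum fun i hi => mul_log_div_le (hq i hi) (hp i hi)
    _ = ∑ i ∈ s, (q i - p i) ^ 2 / p i := by
        rw [sum_add_distrib, sum_sub_distrib, hsum, sub_self, add_zero]

lemma abs_sum_mul_log_div_le (hq : ∀ i ∈ s, 0 ≤ q i) (hp : ∀ i ∈ s, 0 < p i)
    (hsum : ∑ i ∈ s, q i = ∑ i ∈ s, p i) {δ : ℝ} (hδ : ∀ i ∈ s, |q i - p i| ≤ p i * δ) :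
    |∑ i ∈ s, q i * log (q i / p i)| ≤ δ ^ 2 * ∑ i ∈ s, p i := by
  rw [abs_of_nonneg (sum_mul_log_div_nonneg hq hp hsum), mul_sum]
  refine (sum_mul_log_div_le_sum_sq_div hq hp hsum).trans (sum_le_sum fun i hi => ?_)
  have hsq : (q i - p i) ^ 2 ≤ (p i * δ) ^ 2 := sq_le_sq.mpr ((hδ i hi).trans (le_abs_self _))
  rw [div_le_iff₀ (hp i hi)]
  linarith

end KLChiSquare

section Hoeffding

variable {Ω ι : Type*} [MeasurableSpace Ω] {μ : Measure Ω} [IsProbabilityMeasure μ]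
  {Y : ι → Ω → ℝ}

lemma measureReal_abs_sum_sub_integral_ge_le_of_iIndepFun (hindep : iIndepFun Y μ)
    (hmeas : ∀ i, Measurable (Y i)) {a b : ℝ} {s : Finset ι}
    (hY : ∀ i ∈ s, ∀ᵐ ω ∂μ, Y i ω ∈ Set.Icc a b) {ε : ℝ} (hε : 0 ≤ ε) :
    μ.real {ω | ε ≤ |∑ i ∈ s, (Y i ω - μ[Y i])|} ≤
      2 * exp (-2 * ε ^ 2 / (#s * (b - a) ^ 2)) := by
  set c : NNReal := (‖b - a‖₊ / 2) ^ 2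
  set Z : ι → Ω → ℝ := fun i ω => Y i ω - μ[Y i]
  have hZ : ∀ i ∈ s, HasSubgaussianMGF (Z i) c μ :=
    fun i hi => hasSubgaussianMGF_of_mem_Icc (hmeas i).aemeasurable (hY i hi)
  have hZindep : iIndepFun Z μ :=
    hindep.comp (fun i (x : ℝ) => x - ∫ ω, Y i ω ∂μ) fun i => measurable_sub_const _
  have hupper := HasSubgaussianMGF.measure_sum_ge_le_of_iIndepFun hZindep hZ hε
  have hlower := HasSubgaussianMGF.measure_sum_ge_le_of_iIndepFun
    (hZindep.comp (fun _ x => -x) fun _ => measurable_neg) (fun i hi => (hZ i hi).neg) hε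
  simp only [Function.comp_apply, sum_neg_distrib] at hlower
  have hexp : -ε ^ 2 / (2 * ((∑ i ∈ s, c : NNReal) : ℝ)) =
      -2 * ε ^ 2 / (#s * (b - a) ^ 2) := by
    simp only [sum_const, nsmul_eq_mul, NNReal.coe_mul, NNReal.coe_natCast, c, NNReal.coe_pow,
      NNReal.coe_div, coe_nnnorm, Real.norm_eq_abs, NNReal.coe_ofNat, div_pow, sq_abs]
    rw [show (2 : ℝ) * (#s * ((b - a) ^ 2 / 2 ^ 2)) = #s * (b - a) ^ 2 / 2 by ring,
      div_div_eq_mul_div]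
    ring
  calc μ.real {ω | ε ≤ |∑ i ∈ s, Z i ω|}
      ≤ μ.real ({ω | ε ≤ ∑ i ∈ s, Z i ω} ∪ {ω | ε ≤ -∑ i ∈ s, Z i ω}) :=
        measureReal_mono fun _ hω ↦ by
          simpa only [Set.mem_union, Set.mem_ofPred_eq, ← le_abs] using hω
    _ ≤ μ.real {ω | ε ≤ ∑ i ∈ s, Z i ω} + μ.real {ω | ε ≤ -∑ i ∈ s, Z i ω} :=
        measureReal_union_le _ _
    _ ≤ 2 * exp (-2 * ε ^ 2 / (#s * (b - a) ^ 2)) := by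
        rw [hexp] at hupper hlower
        linarith

end Hoeffding

section EmpiricalDistribution

variable {Ω : Type*} (X : ℕ → Ω → ℕ) (n : ℕ)

lemma empP_eq_sum_fin (i : ℕ) (ω : Ω) :
    empP X n i ω = (∑ k : Fin n, if X (k + 1) ω = i then (1 : ℝ) else 0) / n := by
  rw [empP, Fin.sum_univ_eq_sum_range (fun k => if X (k + 1) ω = i then (1 : ℝ) else 0),
    range_eq_Ico, sum_Ico_add' (fun j => if X j ω = i then (1 : ℝ) else 0)]
  rfl

lemma empP_nonneg (i : ℕ) (ω : Ω) : 0 ≤ empP X n i ω := by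
  unfold empP
  positivity

lemma sum_empP_eq_one {n : ℕ} (hn : n ≠ 0) {S : Finset ℕ} {ω : Ω}
    (hS : ∀ j ∈ Icc 1 n, X j ω ∈ S) : ∑ i ∈ S, empP X n i ω = 1 := by
  simp only [empP, ← sum_div]
  rw [sum_comm, sum_congr rfl (g := fun _ => 1) fun j hj => by simp [hS j hj]]
  simp [hn]

lemma abs_sum_empP_mul_log_div_le {n : ℕ} (hn : n ≠ 0) {S : Finset ℕ} {p : ℕ → ℝ}
    (hp : ∀ i ∈ S, 0 < p i) (hsum : ∑ i ∈ S, p i = 1) {ω : Ω} (hS : ∀ j ∈ Icc 1 n, X j ω ∈ S)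
    {δ : ℝ} (hδ : ∀ i ∈ S, |empP X n i ω - p i| ≤ p i * δ) :
    |∑ i ∈ S, empP X n i ω * log (empP X n i ω / p i)| ≤ δ ^ 2 := by
  simpa [hsum] using abs_sum_mul_log_div_le (fun i _ => empP_nonneg X n i ω) hp
    (by rw [sum_empP_eq_one X hn hS, hsum]) hδ

lemma measure_lt_abs_empP_sub_le [MeasurableSpace Ω] (μ : Measure Ω) [IsProbabilityMeasure μ]
    (hn : n ≠ 0) (hmeas : ∀ j, Measurable (X j))
    (hindep : iIndepFun (fun k : Fin n => X (k.1 + 1)) μ)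
    {i : ℕ} {q : ℝ} (hdist : ∀ j ∈ Icc 1 n, μ.real {ω | X j ω = i} = q) {t : ℝ} (ht : 0 ≤ t) :
    μ {ω | t < |empP X n i ω - q|} ≤ ENNReal.ofReal (2 * exp (-2 * n * t ^ 2)) := by
  set Y : Fin n → Ω → ℝ := fun k ω => if X (k + 1) ω = i then 1 else 0
  have hYindep : iIndepFun Y μ :=
    hindep.comp (fun _ m => if m = i then (1 : ℝ) else 0) fun _ => .of_discrete
  have hYmeas : ∀ k, Measurable (Y k) := fun k =>
    .ite (hmeas _ (.singleton i)) measurable_const measurable_const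
  have hYmean : ∀ k, μ[Y k] = q := by
    intro k
    have hind : Y k = (X (k + 1) ⁻¹' {i}).indicator 1 := by
      ext ω
      by_cases h : X (k + 1) ω = i <;> simp [Y, h]
    rw [hind, integral_indicator_one (hmeas _ (.singleton i))]
    exact hdist _ (by simp)
  have hYbdd : ∀ k ∈ univ, ∀ᵐ ω ∂μ, Y k ω ∈ Set.Icc (0 : ℝ) 1 :=
    fun k _ => ae_of_all _ fun ω => by by_cases h : X (k + 1) ω = i <;> simp [Y, h]
  have hoeff := measureReal_abs_sum_sub_integral_ge_le_of_iIndepFun hYindep hYmeas hYbdd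
    (ε := n * t) (by positivity)
  have hn0 : (0 : ℝ) < n := by positivity
  have hsub : {ω | t < |empP X n i ω - q|} ⊆ {ω | n * t ≤ |∑ k, (Y k ω - μ[Y k])|} := by
    intro ω hω
    have hemp : empP X n i ω - q = (∑ k, (Y k ω - μ[Y k])) / n := by
      simp only [hYmean, sum_sub_distrib, sum_const, card_univ, Fintype.card_fin, nsmul_eq_mul,
        empP_eq_sum_fin, Y]
      field_simp
    simp only [Set.mem_ofPred_eq, hemp, abs_div, Nat.abs_cast, lt_div_iff₀ hn0] at hω ⊢
    linarith
  refine (measure_mono hsub).trans ((ENNReal.le_ofReal_iff_toReal_le (measure_ne_top _ _)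
    (by positivity)).mpr (hoeff.trans_eq ?_))
  congr 2
  simp only [card_univ, Fintype.card_fin, sub_zero, one_pow, mul_one]
  field_simp

end EmpiricalDistribution

theorem kl_term_hoeffding_bound_general
    {Ω : Type*} [MeasurableSpace Ω] (μ : Measure Ω) [IsProbabilityMeasure μ]
    (X : ℕ → Ω → ℕ) (n K : ℕ) (p : ℕ → ℝ) (σ b : ℝ)
    (hn : 1 ≤ n)
    (hmeas : ∀ j, Measurable (X j))
    (hpos : ∀ i ∈ Finset.Icc 1 K, 0 < p i)
    (hsum : ∑ i ∈ Finset.Icc 1 K, p i = 1)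
    (hrange : ∀ j ∈ Finset.Icc 1 n, ∀ ω, X j ω ∈ Finset.Icc 1 K)
    (hdist : ∀ j ∈ Finset.Icc 1 n, ∀ i ∈ Finset.Icc 1 K,
      μ {ω | X j ω = i} = ENNReal.ofReal (p i))
    (hindep : iIndepFun (fun k : Fin n => X (k.1 + 1)) μ)
    (hσ : 0 < σ) (hb : 0 < b) :
    ∀ ε : ℝ, 0 < ε →
      μ {ω | ε < Real.sqrt (n : ℝ) / (b * σ) *
          |∑ i ∈ Finset.Icc 1 K, empP X n i ω * Real.log (empP X n i ω / p i)|}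
        ≤ ENNReal.ofReal (2 * ∑ i ∈ Finset.Icc 1 K,
            Real.exp (-2 * ε * Real.sqrt (n : ℝ) * b * σ * (p i) ^ 2)) := by
  intro ε hε
  have hn0 : n ≠ 0 := by omega
  have hsqrt : 0 < √(n : ℝ) := by positivity
  set δ := √(ε * b * σ / √n)
  have hδsq : δ ^ 2 = ε * b * σ / √n := sq_sqrt (by positivity)
  have hscale : √(n : ℝ) / (b * σ) * δ ^ 2 = ε := by rw [hδsq]; field_simp
  have hexp : ∀ i, -2 * n * (p i * δ) ^ 2 = -2 * ε * √(n : ℝ) * b * σ * p i ^ 2 := fun i => by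
    rw [mul_pow, hδsq]
    field_simp
    rw [sq_sqrt (Nat.cast_nonneg n)]
    ring
  have hdist' : ∀ i ∈ Icc 1 K, ∀ j ∈ Icc 1 n, μ.real {ω | X j ω = i} = p i := fun i hi j hj => by
    rw [measureReal_def, hdist j hj i hi, ENNReal.toReal_ofReal (hpos i hi).le]
  have hsub : {ω | ε < √(n : ℝ) / (b * σ) *
      |∑ i ∈ Icc 1 K, empP X n i ω * log (empP X n i ω / p i)|} ⊆
      ⋃ i ∈ Icc 1 K, {ω | p i * δ < |empP X n i ω - p i|} := by
    intro ω hω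
    by_contra hc
    simp only [Set.mem_iUnion, Set.mem_ofPred_eq, not_exists, not_lt] at hc
    have hKL := abs_sum_empP_mul_log_div_le X hn0 hpos hsum (hrange · · ω) hc
    exact (Set.mem_ofPred_eq ▸ hω).not_ge (hscale ▸ by gcongr)
  calc _ ≤ μ (⋃ i ∈ Icc 1 K, {ω | p i * δ < |empP X n i ω - p i|}) := measure_mono hsub
    _ ≤ ∑ i ∈ Icc 1 K, μ {ω | p i * δ < |empP X n i ω - p i|} := measure_biUnion_finset_le _ _
    _ ≤ ∑ i ∈ Icc 1 K, ENNReal.ofReal (2 * exp (-2 * n * (p i * δ) ^ 2)) :=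
        sum_le_sum fun i hi => measure_lt_abs_empP_sub_le X n μ hn0 hmeas hindep (hdist' i hi)
          (by have := hpos i hi; positivity)
    _ = _ := by
        simp_rw [hexp, mul_sum]
        exact (ENNReal.ofReal_sum_of_nonneg fun i _ => by positivity).symm

/-- Hoeffding-type bound:
`P((√n/(bσ))|∑_i p̂(i) ln(p̂(i)/p(i))| > ε) ≤ 2 ∑_i exp(−2 ε √n b σ p(i)²)`
(terms with `p̂(i) = 0` vanish, automatic since `Real.log 0 = 0` in Lean). -/
theorem kl_term_hoeffding_bound
    {Ω : Type*} [MeasurableSpace Ω] (μ : Measure Ω) [IsProbabilityMeasure μ]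
    (X : ℕ → Ω → ℕ) (n K : ℕ) (p : ℕ → ℝ) (σ b : ℝ)
    (hn : 1 ≤ n) (hK : 1 ≤ K)
    (hmeas : ∀ j, Measurable (X j))
    (hpos : ∀ i ∈ Finset.Icc 1 K, 0 < p i)
    (hsum : ∑ i ∈ Finset.Icc 1 K, p i = 1)
    (hrange : ∀ j ∈ Finset.Icc 1 n, ∀ ω, X j ω ∈ Finset.Icc 1 K)
    (hdist : ∀ j ∈ Finset.Icc 1 n, ∀ i ∈ Finset.Icc 1 K,
      μ {ω | X j ω = i} = ENNReal.ofReal (p i))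
    (hindep : iIndepFun (fun k : Fin n => X (k.1 + 1)) μ)
    (hσ : 0 < σ) (hb : 0 < b) :
    ∀ ε : ℝ, 0 < ε →
      μ {ω | ε < Real.sqrt (n : ℝ) / (b * σ) *
          |∑ i ∈ Finset.Icc 1 K, empP X n i ω * Real.log (empP X n i ω / p i)|}
        ≤ ENNReal.ofReal (2 * ∑ i ∈ Finset.Icc 1 K,
            Real.exp (-2 * ε * Real.sqrt (n : ℝ) * b * σ * (p i) ^ 2)) :=
  kl_term_hoeffding_bound_general μ X n K p σ b hn hmeas hpos hsum hrange hdist hindep hσ hb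
end

section
/- For each integer $K\ge 3$, let $C_K=\sum_{i=2}^{K}\frac{1}{i\ln i}$ and consider the distribution $p_K(i)=(C_K\, i\ln i)^{-1}$ for $2\le i\le K$. Then Shannon's entropy $H_K=-\sum_{i=2}^{K}p_K(i)\ln p_K(i)$ satisfies $H_K \sim \frac{\ln K}{\ln\ln K}$ as $K\to\infty$, i.e. $\lim_{K\to\infty} H_K\,\ln\ln K/\ln K = 1$. -/
/-!
Since `-log p_K(i) = log C_K + log i + log log i` and `∑ p_K(i) = 1`,
`H_K = (∑_{i=2}^K 1/i) / C_K + log C_K + ∑ p_K(i) log log i`.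
Comparing `C_K` with `∫ dx / (x log x) = log log x` gives `C_K = log log K + O(1)`, and the
harmonic sum is `log K + O(1)`, so the first term is `~ log K / log log K`. The other two terms
are `O(log log K)`, since the last is a `p_K`-average of `log log i`, hence `o(log K / log log K)`.
-/

open Filter

/-- The normalizing constant `C_K = ∑_{i=2}^K 1/(i ln i)`. -/
noncomputable def loglogC (K : ℕ) : ℝ :=
  ∑ i ∈ Finset.Icc 2 K, ((i : ℝ) * Real.log (i : ℝ))⁻¹

/-- The distribution `p_K(i) = (C_K i ln i)⁻¹`, `2 ≤ i ≤ K`. -/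
noncomputable def loglogP (K i : ℕ) : ℝ := (loglogC K * (i : ℝ) * Real.log (i : ℝ))⁻¹

/-- Shannon's entropy `H_K = −∑_{i=2}^K p_K(i) ln p_K(i)`. -/
noncomputable def loglogEntropy (K : ℕ) : ℝ :=
  -∑ i ∈ Finset.Icc 2 K, loglogP K i * Real.log (loglogP K i)

open Asymptotics Finset Real

lemma antitoneOn_inv_mul_log : AntitoneOn (fun x : ℝ => (x * log x)⁻¹) (Set.Ioi 1) := by
  intro x (hx : 1 < x) y _ hxy
  have hlog : 0 < log x := log_pos hx
  exact inv_anti₀ (mul_pos (by linarith) hlog)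
    (mul_le_mul hxy (log_le_log (by linarith) hxy) hlog.le (by linarith))

lemma integral_inv_mul_log {a b : ℝ} (ha : 1 < a) (hab : a ≤ b) :
    ∫ x in a..b, (x * log x)⁻¹ = log (log b) - log (log a) := by
  have hIoi : Set.uIcc a b ⊆ Set.Ioi 1 := by
    rw [Set.uIcc_of_le hab]; exact fun x hx => lt_of_lt_of_le ha hx.1
  refine intervalIntegral.integral_eq_sub_of_hasDerivAt (f := fun t => log (log t))
    (fun x hx => ?_) ?_
  · have hx : 1 < x := hIoi hx
    have h := (hasDerivAt_log (log_pos hx).ne').comp x (hasDerivAt_log (by positivity))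
    rwa [← mul_inv, mul_comm] at h
  · refine ContinuousOn.intervalIntegrable fun x hx => ?_
    have hx : 1 < x := hIoi hx
    have hx0 : 0 < x := by linarith
    exact (continuousAt_id.mul (continuousAt_log hx0.ne')).inv₀
      (mul_pos hx0 (log_pos hx)).ne' |>.continuousWithinAt

lemma sub_le_loglogC {K : ℕ} (hK : 2 ≤ K) : log (log K) - log (log 2) ≤ loglogC K := by
  have hK' : (2 : ℝ) ≤ K := by exact_mod_cast hK
  have hint := AntitoneOn.integral_le_sum_Ico (a := 2) (b := K + 1) (by omega)
    (antitoneOn_inv_mul_log.mono fun _ hx => one_lt_two.trans_le hx.1)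
  rw [Nat.cast_ofNat, integral_inv_mul_log one_lt_two (by push_cast; linarith),
    Ico_add_one_right_eq_Icc] at hint
  have hmono : log (log K) ≤ log (log ((K + 1 : ℕ) : ℝ)) :=
    log_le_log (log_pos (by linarith)) (log_le_log (by linarith) (by push_cast; linarith))
  exact (sub_le_sub_right hmono _).trans hint

lemma loglogC_le {K : ℕ} (hK : 2 ≤ K) :
    loglogC K ≤ (2 * log 2)⁻¹ + (log (log K) - log (log 2)) := by
  have hint := AntitoneOn.sum_le_integral_Ico (a := 2) (b := K) hK
    (antitoneOn_inv_mul_log.mono fun _ hx => one_lt_two.trans_le hx.1)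
  rw [Nat.cast_ofNat, integral_inv_mul_log one_lt_two (by exact_mod_cast hK)] at hint
  have hsplit : loglogC K =
      (2 * log 2)⁻¹ + ∑ i ∈ Ico 2 K, (((i + 1 : ℕ) : ℝ) * log ((i + 1 : ℕ) : ℝ))⁻¹ := by
    rw [loglogC, ← Ico_add_one_right_eq_Icc, sum_eq_sum_Ico_succ_bot (by omega),
      sum_Ico_add' (fun i : ℕ => ((i : ℝ) * log i)⁻¹)]
    norm_num
  linarith

lemma isEquivalent_of_sub_isBigO_one {α : Type*} {l : Filter α} {u v : α → ℝ}
    (h : (u - v) =O[l] fun _ => (1 : ℝ)) (hv : Tendsto v l atTop) : u ~[l] v :=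
  h.trans_isLittleO ((isLittleO_one_left_iff ℝ).2 (tendsto_norm_atTop_atTop.comp hv))

lemma tendsto_log_log_natCast_atTop : Tendsto (fun K : ℕ => log (log K)) atTop atTop :=
  tendsto_log_atTop.comp (tendsto_log_atTop.comp tendsto_natCast_atTop_atTop)

lemma isEquivalent_loglogC : loglogC ~[atTop] fun K => log (log K) := by
  refine isEquivalent_of_sub_isBigO_one (IsBigO.of_bound ((2 * log 2)⁻¹ - log (log 2)) ?_)
    tendsto_log_log_natCast_atTop
  filter_upwards [eventually_ge_atTop 2] with K hK
  have hlower := sub_le_loglogC hK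
  have hupper := loglogC_le hK
  have : log (log 2) < 0 := log_neg (log_pos one_lt_two) (by linarith [log_two_lt_d9])
  rw [Pi.sub_apply, norm_one, mul_one, Real.norm_eq_abs, abs_le]
  constructor <;> linarith

lemma sum_Icc_two_inv_eq_harmonic_sub_one {K : ℕ} (hK : 1 ≤ K) :
    ∑ i ∈ Icc 2 K, (i : ℝ)⁻¹ = harmonic K - 1 := by
  rw [harmonic_eq_sum_Icc, Rat.cast_sum, Icc_eq_cons_Ioc hK, sum_cons, ← Icc_add_one_left_eq_Ioc]
  norm_num

lemma isEquivalent_sum_Icc_two_inv :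
    (fun K : ℕ => ∑ i ∈ Icc 2 K, (i : ℝ)⁻¹) ~[atTop] fun K => log (K : ℝ) := by
  refine isEquivalent_of_sub_isBigO_one ?_ (tendsto_log_atTop.comp tendsto_natCast_atTop_atTop)
  refine ((tendsto_harmonic_sub_log.sub_const 1).isBigO_one ℝ).congr' ?_ EventuallyEq.rfl
  filter_upwards [eventually_ge_atTop 1] with K hK
  rw [Pi.sub_apply, sum_Icc_two_inv_eq_harmonic_sub_one hK]
  ring

lemma loglogP_eq (K i : ℕ) : loglogP K i = (loglogC K)⁻¹ * ((i : ℝ) * log i)⁻¹ := by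
  rw [loglogP, mul_assoc, mul_inv]

lemma loglogC_pos {K : ℕ} (hK : 2 ≤ K) : 0 < loglogC K := by
  refine sum_pos (fun i hi => ?_) ⟨2, mem_Icc.2 ⟨le_rfl, hK⟩⟩
  have hi : (1 : ℝ) < i := by exact_mod_cast (mem_Icc.1 hi).1
  have := log_pos hi
  positivity

lemma loglogP_nonneg {K i : ℕ} (hK : 2 ≤ K) (hi : 2 ≤ i) : 0 ≤ loglogP K i := by
  have hi : (1 : ℝ) < i := by exact_mod_cast hi
  have := log_pos hi
  have := loglogC_pos hK
  rw [loglogP_eq]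
  positivity

lemma sum_loglogP {K : ℕ} (hK : 2 ≤ K) : ∑ i ∈ Icc 2 K, loglogP K i = 1 := by
  simp only [loglogP_eq, ← mul_sum]
  exact inv_mul_cancel₀ (loglogC_pos hK).ne'

lemma loglogEntropy_eq {K : ℕ} (hK : 2 ≤ K) :
    loglogEntropy K = (∑ i ∈ Icc 2 K, (i : ℝ)⁻¹) / loglogC K
      + (log (loglogC K) + ∑ i ∈ Icc 2 K, loglogP K i * log (log i)) := by
  have hC := loglogC_pos hK
  have hterm : ∀ i ∈ Icc 2 K, -(loglogP K i * log (loglogP K i)) =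
      (i : ℝ)⁻¹ / loglogC K + (loglogP K i * log (loglogC K) + loglogP K i * log (log i)) := by
    intro i hi
    have hi : (1 : ℝ) < i := by exact_mod_cast (mem_Icc.1 hi).1
    have hlog := log_pos hi
    rw [loglogP, log_inv, log_mul (by positivity) hlog.ne', log_mul hC.ne' (by positivity)]
    field_simp
    ring
  rw [loglogEntropy, ← sum_neg_distrib, sum_congr rfl hterm, sum_add_distrib, sum_add_distrib,
    sum_div, ← sum_mul, sum_loglogP hK, one_mul]

lemma abs_sum_mul_le_of_sum_eq_one {ι : Type*} {s : Finset ι} {p x : ι → ℝ} {B : ℝ}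
    (hp : ∀ i ∈ s, 0 ≤ p i) (hsum : ∑ i ∈ s, p i = 1) (hx : ∀ i ∈ s, |x i| ≤ B) :
    |∑ i ∈ s, p i * x i| ≤ B :=
  calc |∑ i ∈ s, p i * x i| ≤ ∑ i ∈ s, p i * |x i| := by
        refine (abs_sum_le_sum_abs _ _).trans_eq (sum_congr rfl fun i hi => ?_)
        rw [abs_mul, abs_of_nonneg (hp i hi)]
    _ ≤ ∑ i ∈ s, p i * B :=
        sum_le_sum fun i hi => mul_le_mul_of_nonneg_left (hx i hi) (hp i hi)
    _ = B := by rw [← sum_mul, hsum, one_mul]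

lemma isBigO_sum_loglogP_mul_log_log :
    (fun K => ∑ i ∈ Icc 2 K, loglogP K i * log (log i)) =O[atTop]
      fun K : ℕ => log (log K) := by
  refine IsBigO.of_bound 1 ?_
  filter_upwards [eventually_ge_atTop 2,
    tendsto_log_log_natCast_atTop.eventually_ge_atTop (-log (log 2))] with K hK hKlarge
  rw [one_mul, Real.norm_eq_abs, Real.norm_eq_abs]
  refine abs_sum_mul_le_of_sum_eq_one (fun i hi => loglogP_nonneg hK (mem_Icc.1 hi).1)
    (sum_loglogP hK) fun i hi => ?_
  have h2i : (2 : ℝ) ≤ i := by exact_mod_cast (mem_Icc.1 hi).1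
  have hiK : (i : ℝ) ≤ K := by exact_mod_cast (mem_Icc.1 hi).2
  have hlow : log (log 2) ≤ log (log i) :=
    log_le_log (log_pos one_lt_two) (log_le_log two_pos h2i)
  have hup : log (log i) ≤ log (log K) :=
    log_le_log (log_pos (by linarith)) (log_le_log (by linarith) hiK)
  rw [abs_le]
  constructor <;> linarith [le_abs_self (log (log (K : ℝ)))]

lemma isLittleO_log_div_log : log =o[atTop] fun x => x / log x := by
  have h := (isLittleO_pow_log_id_atTop (n := 2)).mul_isBigO (isBigO_refl (fun x => (log x)⁻¹) _)
  refine h.congr' ?_ EventuallyEq.rfl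
  filter_upwards [tendsto_log_atTop.eventually_gt_atTop 0] with x hx
  field_simp

/-- For the distribution `p_K(i) ∝ 1/(i ln i)`, `H_K ∼ (ln K)/(ln ln K)` as `K → ∞`. -/
theorem loglog_entropy_asymptotics :
    Tendsto (fun K : ℕ =>
        loglogEntropy K * Real.log (Real.log (K : ℝ)) / Real.log (K : ℝ))
      atTop (nhds 1) := by
  have hlog : Tendsto (fun K : ℕ => log (K : ℝ)) atTop atTop :=
    tendsto_log_atTop.comp tendsto_natCast_atTop_atTop
  have hC := isEquivalent_loglogC
  have hloglog : (fun K : ℕ => log (log K)) =o[atTop] fun K => log K / log (log K) :=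
    isLittleO_log_div_log.comp_tendsto hlog
  have hmain : (fun K : ℕ => (∑ i ∈ Icc 2 K, (i : ℝ)⁻¹) / loglogC K) ~[atTop]
      fun K => log K / log (log K) :=
    isEquivalent_sum_Icc_two_inv.div hC
  have hlogC : (fun K => log (loglogC K)) =o[atTop] fun K : ℕ => log (log K) :=
    (isLittleO_log_id_atTop.comp_tendsto (hC.symm.tendsto_atTop tendsto_log_log_natCast_atTop)
      ).trans_isBigO hC.isBigO
  have hrem : (fun K => log (loglogC K) + ∑ i ∈ Icc 2 K, loglogP K i * log (log i)) =o[atTop]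
      fun K : ℕ => log K / log (log K) :=
    (hlogC.trans hloglog).add (isBigO_sum_loglogP_mul_log_log.trans_isLittleO hloglog)
  have hH : loglogEntropy ~[atTop] fun K => log K / log (log K) :=
    (hmain.add_isLittleO hrem).congr_left <| (eventually_ge_atTop 2).mono fun K hK =>
      (loglogEntropy_eq hK).symm
  refine ((isEquivalent_iff_tendsto_one ?_).1 hH).congr fun K => ?_
  · filter_upwards [hlog.eventually_gt_atTop 0,
      tendsto_log_log_natCast_atTop.eventually_gt_atTop 0] with K h1 h2
    positivity
  · rw [Pi.div_apply, div_div_eq_mul_div]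
end
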